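/- arXiv:2106.00878 — 2 statements merged into one kernel-verified Lean document; each statement's English description precedes it below -/
import Mathlib

section
/- Let G be a finite group, H ⊴ G with G/H abelian, N ≤ G a subgroup, N_H = N ∩ H, and S ≤ N_H an abelian subgroup normal in N on which a character θ is fixed by N. Let σ be a finite-dimensional semisimple representation of the semidirect-product-style subgroup H ⋊ N ≤ G ⋊ N (where N acts on G by conjugation) such that for every s ∈ S, the element s^{-1} ⋊ s acts on σ by the scalar θ(s). Define σ' : H × N_H → GL(σ) by σ'(h,n) = σ(h n^{-1} ⋊ n). If End_H(σ) = ⊕_{n ∈ N_H/S} ℂ·σ(n^{-1} ⋊ n), then for every 1-dimensional character θ̃ of N_H extending θ, there is exactly one irreducible constituent τ of σ|_H such that τ ⊠ θ̃ occurs in σ', and it occurs with multiplicity one. -/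
/-!
Write `T n = σ(n⁻¹ ⋊ n)`, a representation of `N_H` commuting with `H`, and let
`e = |N_H|⁻¹ ∑ₙ θ̃(n)⁻¹ T n` be the `θ̃`-isotypic projector of `T`. It lies in
`End_H(σ) = span {T n}`, and `T n ∘ e = θ̃(n) e` gives `a ∘ e ∈ ℂ e` for every `a ∈ End_H(σ)`.
Since `T` and `θ̃` both restrict to `θ` on `S`, the summands of `e` are constant on cosets of `S`,
so linear independence of the `T n` over `N_H / S` gives `e ≠ 0`. By Maschke, `im e` is then an
irreducible `H`-constituent `τ`, and `Hom_{H × N_H}(τ ⊠ θ̃, σ') = Hom_H(τ, im e) = ℂ`. Any other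
`τ'` with `τ' ⊠ θ̃` in `σ'` maps `H`-equivariantly into `im e`, hence `τ' ≅ τ` by Schur.
-/

noncomputable section

section RepHelpers

variable {K : Type*} [Group K] {V : Type*} [AddCommGroup V] [Module ℂ V]
variable {W : Type*} [AddCommGroup W] [Module ℂ W]

def RepInvariant (ρ : Representation ℂ K V) (p : Submodule ℂ V) : Prop :=
  ∀ (g : K), ∀ v ∈ p, ρ g v ∈ p

def RepIrreducible (ρ : Representation ℂ K V) : Prop :=
  Nontrivial V ∧ ∀ p : Submodule ℂ V, RepInvariant ρ p → p = ⊥ ∨ p = ⊤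

def equivariantMaps (ρ : Representation ℂ K V) (σ : Representation ℂ K W) :
    Submodule ℂ (V →ₗ[ℂ] W) where
  carrier := {f | ∀ (g : K) (v : V), f (ρ g v) = σ g (f v)}
  add_mem' := fun hf hg => by
    intro k v
    simp only [LinearMap.add_apply]
    rw [hf k v, hg k v, map_add]
  zero_mem' := by intro k v; simp
  smul_mem' := fun c f hf => by
    intro k v
    simp only [LinearMap.smul_apply]
    rw [hf k v, map_smul]

/-- The multiplicity of `ρ` in the semisimple representation `σ`. -/
def repMult (ρ : Representation ℂ K V) (σ : Representation ℂ K W) : ℕ :=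
  Module.finrank ℂ (equivariantMaps ρ σ)

def RepIso (ρ : Representation ℂ K V) (σ : Representation ℂ K W) : Prop :=
  ∃ e : V ≃ₗ[ℂ] W, ∀ (g : K) (v : V), e (ρ g v) = σ g (e v)

def subRep (ρ : Representation ℂ K V) (p : Submodule ℂ V) (hp : RepInvariant ρ p) :
    Representation ℂ K ↥p where
  toFun g := (ρ g).restrict (hp g)
  map_one' := by ext v; simp
  map_mul' := by intro g h; ext v; simp

end RepHelpers

section SD

variable {G : Type*} [Group G]

/-- The conjugation action of a subgroup `N ≤ G` on `G`. -/
def conjAct (N : Subgroup G) : ↥N →* MulAut G :=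
  (MulAut.conj (G := G)).comp N.subtype

/-- The semidirect product `G ⋊ N` for the conjugation action of `N ≤ G` on `G`. -/
abbrev GsdN (N : Subgroup G) := SemidirectProduct G ↥N (conjAct N)

/-- The subgroup `H ⋊ N` of `G ⋊ N`, for `H ⊴ G`. -/
def HsdN (H : Subgroup G) (hH : H.Normal) (N : Subgroup G) : Subgroup (GsdN N) where
  carrier := {x | x.left ∈ H}
  one_mem' := by simp [Set.mem_setOf_eq]
  mul_mem' := by
    intro a b ha hb
    simp only [Set.mem_setOf_eq, SemidirectProduct.mul_left] at *
    exact H.mul_mem ha (hH.conj_mem _ hb _)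
  inv_mem' := by
    intro a ha
    simp only [Set.mem_setOf_eq, SemidirectProduct.inv_left] at *
    exact hH.conj_mem _ (H.inv_mem ha) _

/-- The inclusion `H → H ⋊ N`, `h ↦ h ⋊ 1`. -/
def jH (H : Subgroup G) (hH : H.Normal) (N : Subgroup G) : ↥H →* ↥(HsdN H hH N) where
  toFun h := ⟨⟨(h : G), 1⟩, h.2⟩
  map_one' := by ext <;> rfl
  map_mul' := by
    intro a b
    refine Subtype.ext (SemidirectProduct.ext ?_ ?_)
    · change ((a * b : ↥H) : G) = (a : G) * (conjAct N 1) (b : G)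
      simp [conjAct]
    · change (1 : ↥N) = 1 * 1
      simp

/-- The homomorphism `H × N_H → H ⋊ N`, `(h, n) ↦ h n⁻¹ ⋊ n`. -/
def jHNH (H : Subgroup G) (hH : H.Normal) (N : Subgroup G) :
    ↥H × ↥(N ⊓ H) →* ↥(HsdN H hH N) where
  toFun p := ⟨⟨(p.1 : G) * ((p.2 : G))⁻¹, ⟨(p.2 : G), p.2.2.1⟩⟩,
    H.mul_mem p.1.2 (H.inv_mem p.2.2.2)⟩
  map_one' := by ext <;> simp [HsdN, conjAct]
  map_mul' := by
    intro a b
    refine Subtype.ext (SemidirectProduct.ext ?_ ?_)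
    · change ((a * b).1 : G) * (((a * b).2 : G))⁻¹ = ((a.1 : G) * ((a.2 : G))⁻¹) *
        (conjAct N ⟨(a.2 : G), a.2.2.1⟩) ((b.1 : G) * ((b.2 : G))⁻¹)
      simp [conjAct]
      group
    · change (⟨((a * b).2 : G), (a * b).2.2.1⟩ : ↥N) = ⟨(a.2 : G), a.2.2.1⟩ * ⟨(b.2 : G), b.2.2.1⟩
      ext
      simp

/-- The element `n⁻¹ ⋊ n` of `H ⋊ N` for `n ∈ N_H = N ∩ H`. -/
def xdiag (H : Subgroup G) (hH : H.Normal) (N : Subgroup G) (n : ↥(N ⊓ H)) :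
    ↥(HsdN H hH N) :=
  ⟨⟨((n : G))⁻¹, ⟨(n : G), n.2.1⟩⟩, H.inv_mem n.2.2⟩

end SD

section Box

variable {G : Type*} [Group G] {K : Type*} [Group K]
variable {W : Type*} [AddCommGroup W] [Module ℂ W]

/-- The external tensor product `τ ⊠ θ̃` of a representation `τ` of `A` with a
1-dimensional character `θ̃` of `B`, realized on the space of `τ`. -/
def boxRep {A B : Type*} [Group A] [Group B] (τ : Representation ℂ A W) (χ : B →* ℂˣ) :
    Representation ℂ (A × B) W where
  toFun p := (χ p.2 : ℂ) • τ p.1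
  map_one' := by simp
  map_mul' := by
    intro a b
    ext v
    simp [smul_smul, mul_comm]

end Box


section SemidirectIdentities

variable {G : Type*} [Group G] (H : Subgroup G) (hH : H.Normal) (N : Subgroup G)

lemma xdiag_one : xdiag H hH N 1 = 1 := by
  ext <;> simp [xdiag, conjAct]

lemma xdiag_mul (n m : ↥(N ⊓ H)) :
    xdiag H hH N (n * m) = xdiag H hH N n * xdiag H hH N m := by
  refine Subtype.ext (SemidirectProduct.ext ?_ ?_)
  · change ((n * m : ↥(N ⊓ H)) : G)⁻¹ = (n : G)⁻¹ * (conjAct N ⟨(n : G), n.2.1⟩) ((m : G)⁻¹)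
    simp [conjAct]
    group
  · ext
    simp [xdiag]

def xdiagHom : ↥(N ⊓ H) →* ↥(HsdN H hH N) where
  toFun := xdiag H hH N
  map_one' := xdiag_one H hH N
  map_mul' := xdiag_mul H hH N

lemma jHNH_apply (h : ↥H) (n : ↥(N ⊓ H)) :
    jHNH H hH N (h, n) = jH H hH N h * xdiag H hH N n := by
  refine Subtype.ext (SemidirectProduct.ext ?_ ?_)
  · change (h : G) * (n : G)⁻¹ = (h : G) * (conjAct N 1) ((n : G)⁻¹)
    simp [conjAct]
  · change (⟨(n : G), n.2.1⟩ : ↥N) = 1 * ⟨(n : G), n.2.1⟩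
    simp

end SemidirectIdentities

section Representation

variable {K : Type*} [Group K] {V : Type*} [AddCommGroup V] [Module ℂ V]
  {W : Type*} [AddCommGroup W] [Module ℂ W]

lemma RepIso.symm {ρ : Representation ℂ K V} {σ : Representation ℂ K W} :
    RepIso ρ σ → RepIso σ ρ := by
  rintro ⟨e, he⟩
  refine ⟨e.symm, fun g w => e.injective ?_⟩
  rw [he, LinearEquiv.apply_symm_apply, LinearEquiv.apply_symm_apply]

lemma repIso_of_mem_equivariantMaps {ρ : Representation ℂ K V} {σ : Representation ℂ K W}
    (hρ : RepIrreducible ρ) (hσ : RepIrreducible σ) {f : V →ₗ[ℂ] W}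
    (hf : f ∈ equivariantMaps ρ σ) (hf0 : f ≠ 0) : RepIso ρ σ := by
  have hker : LinearMap.ker f = ⊥ := by
    refine (hρ.2 _ fun g v hv => ?_).resolve_right fun h => hf0 ?_
    · rw [LinearMap.mem_ker] at hv ⊢
      rw [hf g v, hv, map_zero]
    · exact LinearMap.ker_eq_top.mp h
  have hrange : LinearMap.range f = ⊤ := by
    refine (hσ.2 _ ?_).resolve_left fun h => hf0 (LinearMap.range_eq_bot.mp h)
    rintro g _ ⟨v, rfl⟩
    exact ⟨ρ g v, hf g v⟩
  exact ⟨LinearEquiv.ofBijective f ⟨LinearMap.ker_eq_bot.mp hker,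
    LinearMap.range_eq_top.mp hrange⟩, hf⟩

lemma exists_repInvariant_isCompl [Finite K] (ρ : Representation ℂ K V) (p : Submodule ℂ V)
    (hp : RepInvariant ρ p) : ∃ q : Submodule ℂ V, RepInvariant ρ q ∧ IsCompl p q := by
  obtain ⟨q, hq⟩ := exists_isCompl (⟨p, fun g _ hv => hp g _ hv⟩ : Subrepresentation ρ)
  exact ⟨q.toSubmodule, fun g _ hv => q.apply_mem_toSubmodule g hv,
    disjoint_iff.mpr (congrArg Subrepresentation.toSubmodule hq.inf_eq_bot),
    codisjoint_iff.mpr (congrArg Subrepresentation.toSubmodule hq.sup_eq_top)⟩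

lemma mul_mem_equivariantMaps {ρ : Representation ℂ K V} {a b : Module.End ℂ V}
    (ha : a ∈ equivariantMaps ρ ρ) (hb : b ∈ equivariantMaps ρ ρ) :
    a * b ∈ equivariantMaps ρ ρ := fun g v => by
  rw [Module.End.mul_apply, Module.End.mul_apply, hb g v, ha g]

lemma projection_mem_equivariantMaps {ρ : Representation ℂ K V} {p q : Submodule ℂ V}
    (hp : RepInvariant ρ p) (hq : RepInvariant ρ q) (hpq : IsCompl p q) :
    p.projection q hpq ∈ equivariantMaps ρ ρ := fun g v => by
  have := (LinearMap.IsIdempotentElem.commute_iff (T := ρ g)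
    (Submodule.isIdempotentElem_projection hpq)).mpr ⟨?_, ?_⟩
  · exact LinearMap.congr_fun this.eq v
  · rw [Submodule.range_projection]; exact fun v hv => hp g v hv
  · rw [Submodule.ker_projection]; exact fun v hv => hq g v hv

lemma repInvariant_range {ρ : Representation ℂ K V} {e : Module.End ℂ V}
    (he : e ∈ equivariantMaps ρ ρ) : RepInvariant ρ (LinearMap.range e) := by
  rintro g _ ⟨v, rfl⟩
  exact ⟨ρ g v, he g v⟩

end Representation

section PrimitiveIdempotent

variable {K : Type*} [Group K] {V : Type*} [AddCommGroup V] [Module ℂ V]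
  {ρ : Representation ℂ K V} {e : Module.End ℂ V}

lemma repIrreducible_subRep_range
    (hss : ∀ p : Submodule ℂ V, RepInvariant ρ p →
      ∃ q : Submodule ℂ V, RepInvariant ρ q ∧ IsCompl p q)
    (he : e ∈ equivariantMaps ρ ρ) (he_idem : IsIdempotentElem e) (he0 : e ≠ 0)
    (hcorner : ∀ a ∈ equivariantMaps ρ ρ, ∃ c : ℂ, a * e = c • e) :
    RepIrreducible (subRep ρ (LinearMap.range e) (repInvariant_range he)) := by
  refine ⟨Submodule.nontrivial_iff_ne_bot.mpr (mt LinearMap.range_eq_bot.mp he0),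
    fun p hp => (eq_or_ne p ⊥).imp id fun hbot => ?_⟩
  set P := p.map (LinearMap.range e).subtype
  have hP : RepInvariant ρ P := by
    rintro g _ ⟨x, hx, rfl⟩
    exact ⟨_, hp g x hx, rfl⟩
  obtain ⟨q, hq, hPq⟩ := hss P hP
  set π := P.projection q hPq
  have hfix : ∀ v ∈ LinearMap.range e, e v = v :=
    fun _ => (LinearMap.IsIdempotentElem.mem_range_iff he_idem).mp
  have hπe : ∀ v, e (π v) = π v := fun v => by
    obtain ⟨x, -, hx⟩ := Submodule.projection_apply_mem hPq v
    exact hx ▸ hfix x x.2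
  -- `e π e = c e` by primitivity, and testing on a nonzero vector of `P` forces `c = 1`.
  obtain ⟨c, hc⟩ :=
    hcorner (e * π) (mul_mem_equivariantMaps he (projection_mem_equivariantMaps hP hq hPq))
  have hπ : ∀ v ∈ LinearMap.range e, π v = c • v := by
    intro v hv
    have := LinearMap.congr_fun hc v
    rwa [Module.End.mul_apply, Module.End.mul_apply, hfix v hv, hπe, LinearMap.smul_apply,
      hfix v hv] at this
  obtain ⟨u, hu, hu0⟩ := Submodule.exists_mem_ne_zero_of_ne_bot hbot
  have hc1 : c = 1 := smul_left_injective ℂ (Subtype.coe_ne_coe.mpr hu0) <| by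
    simp only [one_smul]
    rw [← hπ u u.2]
    exact Submodule.projection_apply_of_mem_left hPq ⟨u, hu, rfl⟩
  refine eq_top_iff.mpr fun x _ => ?_
  obtain ⟨y, hy, hyx⟩ : (x : V) ∈ P := by
    rw [← one_smul ℂ (x : V), ← hc1, ← hπ x x.2]
    exact Submodule.projection_apply_mem hPq _
  rwa [← Subtype.ext hyx]

lemma equivariantMaps_subRep_range_le_span (he : e ∈ equivariantMaps ρ ρ)
    (he_idem : IsIdempotentElem e)
    (hcorner : ∀ a ∈ equivariantMaps ρ ρ, ∃ c : ℂ, a * e = c • e) :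
    equivariantMaps (subRep ρ (LinearMap.range e) (repInvariant_range he)) ρ ≤
      Submodule.span ℂ {(LinearMap.range e).subtype} := by
  intro f hf
  obtain ⟨c, hc⟩ := hcorner (f ∘ₗ e.rangeRestrict) fun g v => by
    have : e.rangeRestrict (ρ g v) = subRep ρ _ (repInvariant_range he) g (e.rangeRestrict v) :=
      Subtype.ext (he g v)
    rw [LinearMap.comp_apply, LinearMap.comp_apply, this, hf]
  refine Submodule.mem_span_singleton.mpr ⟨c, LinearMap.ext fun x => ?_⟩
  obtain ⟨v, rfl⟩ := e.surjective_rangeRestrict x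
  have hv : e.rangeRestrict (e v) = e.rangeRestrict v := Subtype.ext (LinearMap.congr_fun he_idem v)
  have := LinearMap.congr_fun hc v
  rw [Module.End.mul_apply, LinearMap.comp_apply, hv] at this
  exact this.symm

end PrimitiveIdempotent

section IsotypicProjector

variable {M : Type*} [Group M] [Fintype M] {V : Type*} [AddCommGroup V] [Module ℂ V]
  (T : Representation ℂ M V) (χ : M →* ℂˣ)

def isotypicProjector : Module.End ℂ V :=
  (Fintype.card M : ℂ)⁻¹ • ∑ m : M, ((χ m⁻¹ : ℂˣ) : ℂ) • (T m : Module.End ℂ V)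

lemma isotypicProjector_mem_span : isotypicProjector T χ ∈ Submodule.span ℂ (Set.range T) :=
  Submodule.smul_mem _ _ <| Submodule.sum_mem _ fun m _ =>
    Submodule.smul_mem _ _ (Submodule.subset_span ⟨m, rfl⟩)

lemma mul_isotypicProjector (n : M) :
    T n * isotypicProjector T χ = (χ n : ℂ) • isotypicProjector T χ := by
  rw [isotypicProjector, mul_smul_comm, smul_comm (χ n : ℂ)]
  congr 1
  rw [Finset.mul_sum, Finset.smul_sum]
  refine Fintype.sum_equiv (Equiv.mulLeft n) _ _ fun m => ?_
  rw [Equiv.coe_mulLeft, map_mul T, mul_smul_comm, smul_smul]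
  congr 1
  simp only [map_inv, Units.val_inv_eq_inv_val, mul_inv_rev, map_mul, Units.val_mul]
  field_simp

lemma isotypicProjector_apply_eq_self {v : V} (hv : ∀ m, T m v = (χ m : ℂ) • v) :
    isotypicProjector T χ v = v := by
  have hterm : ∀ m, ((χ m⁻¹ : ℂˣ) : ℂ) • T m v = v := fun m => by
    rw [hv, smul_smul, ← Units.val_mul, ← map_mul, inv_mul_cancel, map_one, Units.val_one,
      one_smul]
  simp only [isotypicProjector, LinearMap.smul_apply, LinearMap.sum_apply, hterm,
    Finset.sum_const, Finset.card_univ]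
  rw [← Nat.cast_smul_eq_nsmul ℂ, smul_smul, inv_mul_cancel₀ (by simp), one_smul]

lemma isIdempotentElem_isotypicProjector : IsIdempotentElem (isotypicProjector T χ) :=
  LinearMap.ext fun v => isotypicProjector_apply_eq_self T χ fun m =>
    LinearMap.congr_fun (mul_isotypicProjector T χ m) v

lemma exists_mul_isotypicProjector_eq_smul {a : Module.End ℂ V}
    (ha : a ∈ Submodule.span ℂ (Set.range T)) :
    ∃ c : ℂ, a * isotypicProjector T χ = c • isotypicProjector T χ := by
  induction ha using Submodule.span_induction with
  | mem x hx =>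
    obtain ⟨m, rfl⟩ := hx
    exact ⟨_, mul_isotypicProjector T χ m⟩
  | zero => exact ⟨0, by rw [zero_mul, zero_smul]⟩
  | add x y _ _ hx hy =>
    obtain ⟨c, hc⟩ := hx
    obtain ⟨d, hd⟩ := hy
    exact ⟨c + d, by rw [add_mul, hc, hd, add_smul]⟩
  | smul r x _ hx =>
    obtain ⟨c, hc⟩ := hx
    exact ⟨r * c, by rw [smul_mul_assoc, hc, smul_smul]⟩

lemma isotypicProjector_ne_zero (S : Subgroup M) (hS : ∀ s ∈ S, T s = (χ s : ℂ) • 1)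
    (hind : LinearIndependent ℂ fun c : M ⧸ S => T (Quotient.out c)) :
    isotypicProjector T χ ≠ 0 := by
  classical
  set f : M → Module.End ℂ V := fun m => ((χ m⁻¹ : ℂˣ) : ℂ) • T m
  have hf : ∀ m : M, f (Quotient.out (QuotientGroup.mk m : M ⧸ S)) = f m := by
    intro m
    obtain ⟨s, hs⟩ := QuotientGroup.mk_out_eq_mul S m
    rw [hs]
    simp only [f, map_mul T, hS s s.2, mul_smul_comm, mul_one, smul_smul]
    congr 1
    simp only [mul_inv_rev, map_mul, map_inv, Units.val_mul, Units.val_inv_eq_inv_val]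
    field_simp
  set fiber : M ⧸ S → Finset M := fun c => {m | (QuotientGroup.mk m : M ⧸ S) = c}
  have hsum : ∑ m, f m =
      ∑ c : M ⧸ S, ((fiber c).card * ((χ (Quotient.out c)⁻¹ : ℂˣ) : ℂ)) • T (Quotient.out c) := by
    rw [← Finset.sum_fiberwise Finset.univ (QuotientGroup.mk : M → M ⧸ S) f]
    refine Finset.sum_congr rfl fun c _ => ?_
    rw [mul_smul, Nat.cast_smul_eq_nsmul, ← Finset.sum_const]
    refine Finset.sum_congr rfl fun m hm => ?_
    rw [← hf, (Finset.mem_filter.mp hm).2]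
  intro h0
  have h0' : ∑ m, f m = 0 := by
    simpa [isotypicProjector, f] using h0
  exact mul_ne_zero (Nat.cast_ne_zero.mpr (Finset.card_ne_zero.mpr ⟨1, by simp [fiber]⟩))
    (Units.ne_zero _) (Fintype.linearIndependent_iff.mp hind _ (hsum ▸ h0') (QuotientGroup.mk 1))

end IsotypicProjector

section IsotypicConstituent

variable {K M V W : Type*} [Group K] [Group M] [AddCommGroup V] [Module ℂ V]
  [AddCommGroup W] [Module ℂ W]
  {ρ : Representation ℂ K V} {T : Representation ℂ M V} {σ' : Representation ℂ (K × M) V}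

lemma mem_equivariantMaps_boxRep_iff (hσ' : ∀ k m, σ' (k, m) = ρ k * T m)
    {τ : Representation ℂ K W} {χ : M →* ℂˣ} {f : W →ₗ[ℂ] V} :
    f ∈ equivariantMaps (boxRep τ χ) σ' ↔
      f ∈ equivariantMaps τ ρ ∧ ∀ m w, T m (f w) = (χ m : ℂ) • f w := by
  constructor
  · intro hf
    refine ⟨fun k w => ?_, fun m w => ?_⟩
    · simpa [boxRep, hσ'] using hf (k, 1) w
    · simpa [boxRep, hσ'] using (hf (1, m) w).symm
  · rintro ⟨hfK, hfM⟩ ⟨k, m⟩ w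
    simp [boxRep, hσ', hfM, hfK k w]

variable [Fintype M] (χ : M →* ℂˣ)

lemma isotypicProjector_mem_equivariantMaps
    (hEnd : equivariantMaps ρ ρ = Submodule.span ℂ (Set.range T)) :
    isotypicProjector T χ ∈ equivariantMaps ρ ρ :=
  hEnd ▸ isotypicProjector_mem_span T χ

lemma repMult_boxRep_range_isotypicProjector_eq_one (hσ' : ∀ k m, σ' (k, m) = ρ k * T m)
    (hEnd : equivariantMaps ρ ρ = Submodule.span ℂ (Set.range T))
    (he0 : isotypicProjector T χ ≠ 0) :
    repMult (boxRep (subRep ρ (LinearMap.range (isotypicProjector T χ))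
      (repInvariant_range (isotypicProjector_mem_equivariantMaps χ hEnd))) χ) σ' = 1 := by
  set e := isotypicProjector T χ
  have he := isotypicProjector_mem_equivariantMaps χ hEnd
  have hι : (LinearMap.range e).subtype ∈
      equivariantMaps (boxRep (subRep ρ _ (repInvariant_range he)) χ) σ' := by
    refine (mem_equivariantMaps_boxRep_iff hσ').mpr ⟨fun k w => rfl, ?_⟩
    rintro m ⟨_, v, rfl⟩
    exact LinearMap.congr_fun (mul_isotypicProjector T χ m) v
  have hι0 : (LinearMap.range e).subtype ≠ 0 := by
    obtain ⟨v, hv⟩ : ∃ v, e v ≠ 0 := by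
      by_contra! h
      exact he0 (LinearMap.ext h)
    exact fun h => hv congr(($h ⟨e v, v, rfl⟩ : V))
  have hle : equivariantMaps (boxRep (subRep ρ _ (repInvariant_range he)) χ) σ' ≤
      Submodule.span ℂ {(LinearMap.range e).subtype} := fun f hf =>
    equivariantMaps_subRep_range_le_span he (isIdempotentElem_isotypicProjector T χ)
      (fun a ha => exists_mul_isotypicProjector_eq_smul T χ (hEnd ▸ ha))
      ((mem_equivariantMaps_boxRep_iff hσ').mp hf).1
  rw [repMult, le_antisymm hle (Submodule.span_le.mpr (Set.singleton_subset_iff.mpr hι)),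
    finrank_span_singleton hι0]

lemma repIso_range_isotypicProjector_of_repMult_ne_zero (hσ' : ∀ k m, σ' (k, m) = ρ k * T m)
    (hEnd : equivariantMaps ρ ρ = Submodule.span ℂ (Set.range T))
    (hirr : RepIrreducible (subRep ρ (LinearMap.range (isotypicProjector T χ))
      (repInvariant_range (isotypicProjector_mem_equivariantMaps χ hEnd))))
    {Wq : Submodule ℂ V} (hWq : RepInvariant ρ Wq) (hirrq : RepIrreducible (subRep ρ Wq hWq))
    (hmult : repMult (boxRep (subRep ρ Wq hWq) χ) σ' ≠ 0) :
    RepIso (subRep ρ (LinearMap.range (isotypicProjector T χ))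
      (repInvariant_range (isotypicProjector_mem_equivariantMaps χ hEnd))) (subRep ρ Wq hWq) := by
  obtain ⟨f, hf, hf0⟩ := Submodule.exists_mem_ne_zero_of_ne_bot
    (p := equivariantMaps (boxRep (subRep ρ Wq hWq) χ) σ') fun h => hmult <| by
      rw [repMult, h, finrank_bot]
  obtain ⟨hfK, hfM⟩ := (mem_equivariantMaps_boxRep_iff hσ').mp hf
  have hrange : ∀ w, f w ∈ LinearMap.range (isotypicProjector T χ) := fun w =>
    ⟨f w, isotypicProjector_apply_eq_self T χ fun m => hfM m w⟩
  refine (repIso_of_mem_equivariantMaps hirrq hirr (f := LinearMap.codRestrict _ f hrange)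
    (fun k w => Subtype.ext (hfK k w)) fun h => hf0 ?_).symm
  ext w
  exact congrArg Subtype.val (LinearMap.congr_fun h w)

end IsotypicConstituent

theorem stmt4_general {G : Type*} [Group G] [Finite G]
    (H N S : Subgroup G) (hH : H.Normal)
    (hSNH : S ≤ N ⊓ H)
    (θ : ↥S →* ℂˣ)
    (V : Type) [AddCommGroup V] [Module ℂ V]
    (σ : Representation ℂ ↥(HsdN H hH N) V)
    (hθσ : ∀ s : ↥S,
      σ (xdiag H hH N ⟨(s : G), hSNH s.2⟩) = (θ s : ℂ) • LinearMap.id)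
    (h1span : equivariantMaps (σ.comp (jH H hH N)) (σ.comp (jH H hH N)) =
      Submodule.span ℂ (Set.range fun n : ↥(N ⊓ H) => σ (xdiag H hH N n)))
    (h1indep : LinearIndependent ℂ
      (fun c : (↥(N ⊓ H) ⧸ S.subgroupOf (N ⊓ H)) => σ (xdiag H hH N (Quotient.out c)))) :
    ∀ θt : ↥(N ⊓ H) →* ℂˣ, (∀ s : ↥S, θt ⟨(s : G), hSNH s.2⟩ = θ s) →
      ∃ (Wp : Submodule ℂ V) (hWp : RepInvariant (σ.comp (jH H hH N)) Wp),
        RepIrreducible (subRep (σ.comp (jH H hH N)) Wp hWp) ∧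
        repMult (boxRep (subRep (σ.comp (jH H hH N)) Wp hWp) θt)
          (σ.comp (jHNH H hH N)) = 1 ∧
        ∀ (Wq : Submodule ℂ V) (hWq : RepInvariant (σ.comp (jH H hH N)) Wq),
          RepIrreducible (subRep (σ.comp (jH H hH N)) Wq hWq) →
          repMult (boxRep (subRep (σ.comp (jH H hH N)) Wq hWq) θt)
            (σ.comp (jHNH H hH N)) ≠ 0 →
          RepIso (subRep (σ.comp (jH H hH N)) Wp hWp)
            (subRep (σ.comp (jH H hH N)) Wq hWq) := by
  intro θt hext
  let := Fintype.ofFinite ↥(N ⊓ H)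
  set ρ := σ.comp (jH H hH N)
  set T := σ.comp (xdiagHom H hH N)
  have hσ' : ∀ h n, σ.comp (jHNH H hH N) (h, n) = ρ h * T n := fun h n => by
    rw [MonoidHom.comp_apply, jHNH_apply, map_mul]
    rfl
  have hTS : ∀ s ∈ S.subgroupOf (N ⊓ H), T s = (θt s : ℂ) • 1 := fun s hs => by
    have hσS := hθσ ⟨s, Subgroup.mem_subgroupOf.mp hs⟩
    rw [← hext ⟨s, Subgroup.mem_subgroupOf.mp hs⟩] at hσS
    exact hσS
  have he0 := isotypicProjector_ne_zero T θt _ hTS h1indep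
  have hEnd : equivariantMaps ρ ρ = Submodule.span ℂ (Set.range T) := h1span
  have hirr := repIrreducible_subRep_range (exists_repInvariant_isCompl ρ)
    (isotypicProjector_mem_equivariantMaps θt hEnd) (isIdempotentElem_isotypicProjector T θt) he0
    fun a ha => exists_mul_isotypicProjector_eq_smul T θt (hEnd ▸ ha)
  exact ⟨_, _, hirr, repMult_boxRep_range_isotypicProjector_eq_one θt hσ' hEnd he0,
    fun Wq hWq hirrq hmult =>
      repIso_range_isotypicProjector_of_repMult_ne_zero θt hσ' hEnd hirr hWq hirrq hmult⟩

/-- with `G` finite, `H ⊴ G`, `G/H` abelian, `N ≤ G`, `N_H = N ∩ H`,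
`S ≤ N_H` abelian normal in `N` with `N`-invariant character `θ` (such that every
irreducible representation of `N_H` that is `θ`-isotypic on `S` is 1-dimensional);
`σ` a semisimple representation of `H ⋊ N` on which `s⁻¹ ⋊ s` acts by `θ(s)`, and with
`End_H(σ) = ⊕_{n ∈ N_H/S} ℂ·σ(n⁻¹ ⋊ n)`; set `σ'(h, n) = σ(h n⁻¹ ⋊ n)`.  Then for every
1-dimensional character `θ̃` of `N_H` extending `θ` there is exactly one irreducible
constituent `τ` of `σ|_H` such that `τ ⊠ θ̃` occurs in `σ'`, and it occurs with
multiplicity one. -/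
theorem stmt4 {G : Type*} [Group G] [Finite G]
    (H N S : Subgroup G) (hH : H.Normal)
    (habGH : ∀ a b : G, a * b * a⁻¹ * b⁻¹ ∈ H)
    (hSNH : S ≤ N ⊓ H)
    (habS : ∀ a b : ↥S, a * b = b * a)
    (hSnormN : ∀ (n : ↥N), ∀ s ∈ S, (n : G) * s * ((n : G))⁻¹ ∈ S)
    (θ : ↥S →* ℂˣ)
    (hinv : ∀ (n : ↥N) (s : ↥S),
      θ ⟨(n : G) * (s : G) * ((n : G))⁻¹, hSnormN n s.1 s.2⟩ = θ s)
    (hdim : ∀ (U : Type) [AddCommGroup U] [Module ℂ U] [FiniteDimensional ℂ U]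
      (ρ : Representation ℂ ↥(N ⊓ H) U), RepIrreducible ρ →
      (∀ s : ↥S, ρ ⟨(s : G), hSNH s.2⟩ = (θ s : ℂ) • LinearMap.id) →
      Module.finrank ℂ U = 1)
    (V : Type) [AddCommGroup V] [Module ℂ V] [FiniteDimensional ℂ V]
    (σ : Representation ℂ ↥(HsdN H hH N) V)
    (hss : ∀ p : Submodule ℂ V, RepInvariant σ p →
      ∃ q : Submodule ℂ V, RepInvariant σ q ∧ IsCompl p q)
    (hθσ : ∀ s : ↥S,
      σ (xdiag H hH N ⟨(s : G), hSNH s.2⟩) = (θ s : ℂ) • LinearMap.id)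
    (h1span : equivariantMaps (σ.comp (jH H hH N)) (σ.comp (jH H hH N)) =
      Submodule.span ℂ (Set.range fun n : ↥(N ⊓ H) => σ (xdiag H hH N n)))
    (h1indep : LinearIndependent ℂ
      (fun c : (↥(N ⊓ H) ⧸ S.subgroupOf (N ⊓ H)) => σ (xdiag H hH N (Quotient.out c)))) :
    ∀ θt : ↥(N ⊓ H) →* ℂˣ, (∀ s : ↥S, θt ⟨(s : G), hSNH s.2⟩ = θ s) →
      ∃ (Wp : Submodule ℂ V) (hWp : RepInvariant (σ.comp (jH H hH N)) Wp),
        RepIrreducible (subRep (σ.comp (jH H hH N)) Wp hWp) ∧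
        repMult (boxRep (subRep (σ.comp (jH H hH N)) Wp hWp) θt)
          (σ.comp (jHNH H hH N)) = 1 ∧
        ∀ (Wq : Submodule ℂ V) (hWq : RepInvariant (σ.comp (jH H hH N)) Wq),
          RepIrreducible (subRep (σ.comp (jH H hH N)) Wq hWq) →
          repMult (boxRep (subRep (σ.comp (jH H hH N)) Wq hWq) θt)
            (σ.comp (jHNH H hH N)) ≠ 0 →
          RepIso (subRep (σ.comp (jH H hH N)) Wp hWp)
            (subRep (σ.comp (jH H hH N)) Wq hWq) :=
  stmt4_general H N S hH hSNH θ V σ hθσ h1span h1indep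
end
end

section
/- Let 1 → A → E → Q → 1 be an extension of finite groups with A abelian, and let η be a character of A fixed by the conjugation action of E. Let Box be the pushout of η : A → ℂ* along A → E, i.e., Box = (ℂ* × E)/{(η(a)^{-1}, a) : a ∈ A}. Then there is a natural dimension-preserving bijection between the set Irr(E, η) of irreducible representations of E whose restriction to A is η-isotypic and the set Irr(Box, id) of irreducible representations of Box on which ℂ* acts by the identity character. -/
/-!
A representation `ρ` of `E` on which `A` acts through `η` extends to `ℂˣ × E` by letting `ℂˣ`
act by scalars, `(z, e) ↦ z • ρ e`; the relation `ρ a = η a • 1` says exactly that this kills the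
generators `(η a⁻¹, a)` of the kernel of `ℂˣ × E → Box`. Conversely a representation of `Box`
restricts along `E → Box`. Since `Box` is generated by the images of `ℂˣ` and `E`, and `ℂˣ` acts by
scalars, a representation of `Box` and its restriction to `E` have the same invariant subspaces,
so irreducibility is preserved. The bijection lives on a fixed space `V`, so it preserves dimension.
-/

noncomputable section

variable {K : Type*} [Group K] {V : Type*} [AddCommGroup V] [Module ℂ V]

section Box

variable (E : Type*) [Group E]

/-- The subgroup of `ℂˣ × E` generated by the elements `(η(a)⁻¹, a)`, `a ∈ A` (it is
already normal when `η` is `E`-invariant). -/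
def boxKer (A : Subgroup E) (η : ↥A →* ℂˣ) : Subgroup (ℂˣ × E) :=
  Subgroup.normalClosure {x | ∃ a : ↥A, x = ((η a)⁻¹, (a : E))}

instance (A : Subgroup E) (η : ↥A →* ℂˣ) : (boxKer E A η).Normal :=
  Subgroup.normalClosure_normal

/-- The pushout `Box = (ℂˣ × E)/{(η(a)⁻¹, a) : a ∈ A}` of `η : A → ℂˣ` along `A → E`. -/
def BoxGrp (A : Subgroup E) (η : ↥A →* ℂˣ) : Type _ :=
  (ℂˣ × E) ⧸ boxKer E A η

instance (A : Subgroup E) (η : ↥A →* ℂˣ) : Group (BoxGrp E A η) :=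
  inferInstanceAs (Group ((ℂˣ × E) ⧸ boxKer E A η))

/-- The canonical homomorphism `E → Box`. -/
def boxJ (A : Subgroup E) (η : ↥A →* ℂˣ) : E →* BoxGrp E A η :=
  (QuotientGroup.mk' (boxKer E A η)).comp (MonoidHom.inr ℂˣ E)

/-- The canonical central homomorphism `ℂˣ → Box`. -/
def boxZ (A : Subgroup E) (η : ↥A →* ℂˣ) : ℂˣ →* BoxGrp E A η :=
  (QuotientGroup.mk' (boxKer E A η)).comp (MonoidHom.inl ℂˣ E)

end Box

namespace BoxGrp

variable {E : Type*} [Group E] {A : Subgroup E} {η : ↥A →* ℂˣ}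

theorem mk_eq_boxZ_mul_boxJ (z : ℂˣ) (e : E) :
    (QuotientGroup.mk (z, e) : BoxGrp E A η) = boxZ E A η z * boxJ E A η e := by
  change _ = QuotientGroup.mk ((z, 1) * (1, e))
  simp

theorem boxJ_coe (a : ↥A) : boxJ E A η (a : E) = boxZ E A η (η a) := by
  refine (QuotientGroup.eq (s := boxKer E A η)).mpr (Subgroup.subset_normalClosure ⟨a⁻¹, ?_⟩)
  simp [MonoidHom.inr, MonoidHom.inl]

theorem hom_ext {M : Type*} [Monoid M] {f g : BoxGrp E A η →* M}
    (hZ : f.comp (boxZ E A η) = g.comp (boxZ E A η))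
    (hJ : f.comp (boxJ E A η) = g.comp (boxJ E A η)) : f = g := by
  ext x
  induction x using QuotientGroup.induction_on with
  | H x =>
    rw [mk_eq_boxZ_mul_boxJ, map_mul, map_mul]
    exact congr_arg₂ (· * ·) (DFunLike.congr_fun hZ x.1) (DFunLike.congr_fun hJ x.2)

def lift (ρ : Representation ℂ E V) (hρ : ∀ a : ↥A, ρ (a : E) = (η a : ℂ) • LinearMap.id) :
    Representation ℂ (BoxGrp E A η) V :=
  QuotientGroup.lift (boxKer E A η)
    (((algebraMap ℂ (Module.End ℂ V)).toMonoidHom.comp (Units.coeHom ℂ)).noncommCoprod ρ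
      fun z e => Algebra.commute_algebraMap_left (z : ℂ) (ρ e))
    (Subgroup.normalClosure_le_normal <| by
      rintro _ ⟨a, rfl⟩
      simp [hρ a, ← Algebra.smul_def, smul_smul, Module.End.one_eq_id])

theorem lift_mk (ρ : Representation ℂ E V)
    (hρ : ∀ a : ↥A, ρ (a : E) = (η a : ℂ) • LinearMap.id) (z : ℂˣ) (e : E) :
    lift ρ hρ (QuotientGroup.mk (z, e)) = (z : ℂ) • ρ e := by
  rw [Algebra.smul_def]
  exact QuotientGroup.lift_mk _ _ _

theorem lift_boxZ (ρ : Representation ℂ E V)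
    (hρ : ∀ a : ↥A, ρ (a : E) = (η a : ℂ) • LinearMap.id) (z : ℂˣ) :
    lift ρ hρ (boxZ E A η z) = (z : ℂ) • LinearMap.id := by
  rw [← Module.End.one_eq_id, ← map_one ρ]
  exact lift_mk ρ hρ z 1

theorem lift_comp_boxJ (ρ : Representation ℂ E V)
    (hρ : ∀ a : ↥A, ρ (a : E) = (η a : ℂ) • LinearMap.id) :
    (lift ρ hρ).comp (boxJ E A η) = ρ := by
  ext e : 1
  rw [MonoidHom.comp_apply, ← one_smul ℂ (ρ e), ← Units.val_one]
  exact lift_mk ρ hρ 1 e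

section Restriction

variable {ρt : Representation ℂ (BoxGrp E A η) V}
  (hz : ∀ z : ℂˣ, ρt (boxZ E A η z) = (z : ℂ) • LinearMap.id)
include hz

theorem comp_boxJ_apply_coe (a : ↥A) :
    ρt.comp (boxJ E A η) (a : E) = (η a : ℂ) • LinearMap.id := by
  rw [MonoidHom.comp_apply, boxJ_coe, hz]

theorem lift_comp_boxJ_self : lift (ρt.comp (boxJ E A η)) (comp_boxJ_apply_coe hz) = ρt := by
  refine hom_ext ?_ (lift_comp_boxJ _ _)
  ext z : 1
  simp only [MonoidHom.comp_apply, lift_boxZ, hz]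

theorem repInvariant_comp_boxJ_iff (p : Submodule ℂ V) :
    RepInvariant (ρt.comp (boxJ E A η)) p ↔ RepInvariant ρt p := by
  refine ⟨fun h x v hv => ?_, fun h e => h (boxJ E A η e)⟩
  induction x using QuotientGroup.induction_on with
  | H x =>
    rw [mk_eq_boxZ_mul_boxJ, map_mul, Module.End.mul_apply, hz]
    exact p.smul_mem _ (h x.2 v hv)

theorem repIrreducible_comp_boxJ_iff :
    RepIrreducible (ρt.comp (boxJ E A η)) ↔ RepIrreducible ρt :=
  and_congr_right fun _ =>
    forall_congr' fun p => imp_congr_left (repInvariant_comp_boxJ_iff hz p)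

end Restriction

end BoxGrp

open BoxGrp in
theorem stmt13_general {E : Type*} [Group E]
    (A : Subgroup E)
    (η : ↥A →* ℂˣ)
    (V : Type*) [AddCommGroup V] [Module ℂ V] :
    ∃ e : {ρt : Representation ℂ (BoxGrp E A η) V // RepIrreducible ρt ∧
            ∀ z : ℂˣ, ρt (boxZ E A η z) = (z : ℂ) • LinearMap.id}
        ≃ {ρ : Representation ℂ E V // RepIrreducible ρ ∧
            ∀ a : ↥A, ρ (a : E) = (η a : ℂ) • LinearMap.id},
      ∀ ρt, (e ρt).1 = ρt.1.comp (boxJ E A η) :=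
  ⟨{ toFun := fun ρt =>
        ⟨ρt.1.comp (boxJ E A η), (repIrreducible_comp_boxJ_iff ρt.2.2).2 ρt.2.1,
          comp_boxJ_apply_coe ρt.2.2⟩
     invFun := fun ⟨ρ, hirr, hρ⟩ =>
        ⟨lift ρ hρ,
          (repIrreducible_comp_boxJ_iff (lift_boxZ ρ hρ)).1 (by rw [lift_comp_boxJ]; exact hirr),
          lift_boxZ ρ hρ⟩
     left_inv := fun ⟨_, _, hz⟩ => Subtype.ext (lift_comp_boxJ_self hz)
     right_inv := fun ⟨ρ, _, hρ⟩ => Subtype.ext (lift_comp_boxJ ρ hρ) },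
    fun _ => rfl⟩

/-- let `E` be a finite group, `A ⊴ E` abelian, and `η` a character of `A`
fixed by the conjugation action of `E`.  Let `Box` be the pushout of `η : A → ℂˣ` along
`A → E`.  Then there is a natural dimension-preserving bijection between `Irr(E, η)`
(irreducible representations of `E` whose restriction to `A` is `η`-isotypic) and
`Irr(Box, id)` (irreducible representations of `Box` on which `ℂˣ` acts by the identity
character), given by precomposition with `E → Box`.
(The bijection is realized on each fixed space `V`, whence dimensions are preserved.) -/
theorem stmt13 {E : Type*} [Group E] [Finite E]
    (A : Subgroup E) (hA : A.Normal) (habA : ∀ a b : ↥A, a * b = b * a)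
    (η : ↥A →* ℂˣ)
    (hinv : ∀ (g : E) (a : ↥A), η ⟨g * (a : E) * g⁻¹, hA.conj_mem a.1 a.2 g⟩ = η a)
    (V : Type*) [AddCommGroup V] [Module ℂ V] [FiniteDimensional ℂ V] :
    ∃ e : {ρt : Representation ℂ (BoxGrp E A η) V // RepIrreducible ρt ∧
            ∀ z : ℂˣ, ρt (boxZ E A η z) = (z : ℂ) • LinearMap.id}
        ≃ {ρ : Representation ℂ E V // RepIrreducible ρ ∧
            ∀ a : ↥A, ρ (a : E) = (η a : ℂ) • LinearMap.id},
      ∀ ρt, (e ρt).1 = ρt.1.comp (boxJ E A η) :=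
  stmt13_general A η V
end
end
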